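/- Let a_1,…,a_k, f_1,…,f_k ∈ \bar{ℚ}[X] be nonzero polynomials of degree at most d such that f_i/f_j is non-constant for all 1 ≤ i < j ≤ k, for every 1 ≤ r < s < t ≤ k the pair (f_s/f_r, f_t/f_r) is non-exceptional, and gcd(a_1 f_1, …, a_k f_k) = 1. Then there exists an effectively computable constant C_6 > 0, depending only on a_1,…,a_k, f_1,…,f_k, such that for every n ≥ C_6, the polynomial F_n has at least (2/(k(k−1)))·max_{i=1,…,k}{deg a_i + n·deg f_i} − 2dk distinct roots in \bar{ℚ}. -/

import Mathlib

open Polynomial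

noncomputable section

/-- `z` is a root of unity. -/
def IsRootOfUnity (z : ℂ) : Prop := ∃ n : ℕ, 0 < n ∧ z ^ n = 1

/-- The degree of a rational function. -/
def ratDeg (f : RatFunc ℂ) : ℕ := max f.num.natDegree f.denom.natDegree

/-- A polynomial over `ℂ` has all coefficients algebraic over `ℚ`,
i.e. it is a polynomial over `ℚ̄`. -/
def Polynomial.AlgCoeffs (p : Polynomial ℂ) : Prop := ∀ n, IsAlgebraic ℚ (p.coeff n)

/-- A rational function over `ℂ` is defined over `ℚ̄`. -/
def RatFunc.AlgCoeffs (f : RatFunc ℂ) : Prop :=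
  f.num.AlgCoeffs ∧ f.denom.AlgCoeffs

/-- A finite Blaschke product. -/
def IsFiniteBlaschke (B : RatFunc ℂ) : Prop :=
  ∃ (ζ : ℂ) (n : ℕ) (a : Fin n → ℂ) (m : Fin n → ℕ),
    ‖ζ‖ = 1 ∧ (∀ i, ‖a i‖ < 1) ∧ (∀ i, 0 < m i) ∧
    B = RatFunc.C ζ *
      ∏ i, ((RatFunc.X - RatFunc.C (a i)) /
            (1 - RatFunc.C ((starRingEnd ℂ) (a i)) * RatFunc.X)) ^ m i

/-- A quotient of finite Blaschke products. -/
def IsBlaschkeQuotient (Q : RatFunc ℂ) : Prop :=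
  ∃ B₁ B₂ : RatFunc ℂ, IsFiniteBlaschke B₁ ∧ IsFiniteBlaschke B₂ ∧ Q = B₁ / B₂

/-- Composition `p ∘ q` of rational functions. -/
def ratComp (p q : RatFunc ℂ) : RatFunc ℂ :=
  RatFunc.eval (algebraMap ℂ (RatFunc ℂ)) q p

/-- A pair of rational functions is exceptional if both components can be
decomposed through a common rational function via quotients of finite Blaschke
products. -/
def IsExceptionalPair (g₁ g₂ : RatFunc ℂ) : Prop :=
  ∃ Q₁ Q₂ g : RatFunc ℂ, IsBlaschkeQuotient Q₁ ∧ IsBlaschkeQuotient Q₂ ∧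
    g₁ = ratComp Q₁ g ∧ g₂ = ratComp Q₂ g

/-- Evaluation of a rational function at a complex point. -/
def ratEval (f : RatFunc ℂ) (α : ℂ) : ℂ := RatFunc.eval (RingHom.id ℂ) α f

/-- The exceptional set `𝔈_{𝐚,𝐟}` for a family of rational functions. -/
def exceptionalSetR {k : ℕ} (a f : Fin k → RatFunc ℂ) : Set ℂ :=
  {α | (∃ i j : Fin k, i < j ∧ IsRootOfUnity (ratEval (f i) α / ratEval (f j) α)) ∨
    ∃ i : Fin k, ratEval (a i) α = 0 ∨ ratEval (f i) α = 0}

/-- The exceptional set `𝔈_{𝐚,𝐟}` for a family of polynomials. -/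
def exceptionalSetP {k : ℕ} (a f : Fin k → Polynomial ℂ) : Set ℂ :=
  {α | (∃ i j : Fin k, i < j ∧ IsRootOfUnity ((f i).eval α / (f j).eval α)) ∨
    ∃ i : Fin k, (a i).eval α = 0 ∨ (f i).eval α = 0}

/-- The degree of the Galois closure of `ℚ(α)` over `ℚ`. -/
def galDeg (α : ℂ) : ℕ :=
  Module.finrank ℚ
    (IntermediateField.normalClosure ℚ (IntermediateField.adjoin ℚ ({α} : Set ℂ)) ℂ)

/-- A primitive integer polynomial associated with the minimal polynomial of `α`. -/
def intMinpoly (α : ℂ) : Polynomial ℤ :=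
  (IsLocalization.integerNormalization (nonZeroDivisors ℤ) (minpoly ℚ α)).primPart

/-- The absolute logarithmic Weil height of an algebraic number `α`,
expressed via the Mahler measure of its primitive integer minimal polynomial. -/
def weilHeight (α : ℂ) : ℝ :=
  (1 / ((minpoly ℚ α).natDegree : ℝ)) *
    Real.log ((|(intMinpoly α).leadingCoeff| : ℝ) *
      ((((intMinpoly α).map (Int.castRingHom ℂ)).roots.map fun z => max 1 ‖z‖).prod))

/-- The division group `Γ^div` of a subgroup `Γ ⊆ ℚ̄*`. -/
def divGroup (Γ : Subgroup ℂˣ) : Set ℂ :=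
  {α | IsAlgebraic ℚ α ∧ ∃ n : ℕ, 1 ≤ n ∧ ∃ u ∈ Γ, ((u : ℂˣ) : ℂ) = α ^ n}

/-- Rational functions multiplicatively independent modulo a set `S ⊆ ℂ`. -/
def MultIndepModulo {t : ℕ} (S : Set ℂ) (ψ : Fin t → RatFunc ℂ) : Prop :=
  ∀ h : Fin t → ℤ, h ≠ 0 → ∀ c ∈ S, (∏ i, ψ i ^ h i) ≠ RatFunc.C c

/-- A sequence over a commutative ring is a linear recurrence sequence of order at most `K`. -/
def IsLinRecOfOrderLE {R : Type*} [CommRing R] (u : ℕ → R) (K : ℕ) : Prop :=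
  ∃ k ≤ K, ∃ A : Fin k → R, ∀ n, u (n + k) = ∑ i : Fin k, A i * u (n + i)

/-!
For `k = 2` the bound is the Mason–Stothers theorem for `a₁f₁ⁿ + a₂f₂ⁿ = Fₙ`.

For `k ≥ 3` we use Wronskian descent. The Wronskian of `c₀f₀ⁿ⁺¹` with `∑ᵢ cᵢfᵢⁿ⁺¹` is
`f₀ⁿ · ∑_{i ≠ 0} c'ᵢfᵢⁿ` with coefficients `c'ᵢ` (`wronskianCoeff`) of controlled degree, and
`c'ᵢ ≠ 0` once `n` exceeds the degrees of the `cᵢ`, because `fᵢ/f₀` is not constant. Each step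
loses at most one in the multiplicity at any `α` and a bounded amount of degree, so after `k - 1`
steps `ord_α Fₙ ≤ k - 1 + n·ord_α fᵢ + ord_α e` for a polynomial `e` of bounded degree, and
`deg Fₙ ≥ n·deg fᵢ - O(1)`. Choosing `fᵢ(α) ≠ 0`, which the gcd condition allows, and summing over
the roots gives `max_i (deg aᵢ + n deg fᵢ) ≤ (k - 1)·#{roots of Fₙ} + O(1)`, and
`1/(k - 1) > 2/(k(k - 1))` absorbs the constant for large `n`.
-/

open UniqueFactorizationMonoid Finset

theorem IsCoprime.mul_pow_mul_pow {R : Type*} [CommSemiring R] {a b c d : R}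
    (h : IsCoprime (a * b) (c * d)) (m n : ℕ) : IsCoprime (a * b ^ m) (c * d ^ n) := by
  have h' : IsCoprime (a * b ^ m) (c * d) :=
    h.of_mul_left_left.mul_left h.of_mul_left_right.pow_left
  exact (h'.symm.of_mul_left_left.mul_left h'.symm.of_mul_left_right.pow_left).symm

theorem RatFunc.exists_algebraMap_div_eq_C_of_associated {K : Type*} [Field K] {p q : K[X]}
    (h : Associated p q) :
    ∃ c : K, algebraMap K[X] (RatFunc K) p / algebraMap K[X] (RatFunc K) q = RatFunc.C c := by
  obtain ⟨u, rfl⟩ := h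
  rcases eq_or_ne p 0 with rfl | hp
  · exact ⟨0, by simp⟩
  obtain ⟨r, -, hu⟩ := Polynomial.isUnit_iff.1 u.isUnit
  refine ⟨r⁻¹, ?_⟩
  rw [← hu, map_mul, RatFunc.algebraMap_C, div_mul_cancel_left₀ (RatFunc.algebraMap_ne_zero hp),
    map_inv₀]

namespace Polynomial

section CommRing

variable {R : Type*} [CommRing R]

theorem natDegree_wronskian_le (a b : R[X]) :
    (wronskian a b).natDegree ≤ a.natDegree + b.natDegree := by
  refine (natDegree_sub_le _ _).trans (max_le ?_ ?_)
  · exact natDegree_mul_le.trans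
      (Nat.add_le_add_left ((natDegree_derivative_le b).trans (Nat.sub_le _ _)) _)
  · exact natDegree_mul_le.trans
      (Nat.add_le_add_right ((natDegree_derivative_le a).trans (Nat.sub_le _ _)) _)

theorem rootMultiplicity_add_le_rootMultiplicity_wronskian {u v : R[X]}
    (hw : wronskian u v ≠ 0) (α : R) :
    rootMultiplicity α u + rootMultiplicity α v ≤ rootMultiplicity α (wronskian u v) + 1 := by
  set s := rootMultiplicity α u
  set t := rootMultiplicity α v
  have hu := pow_rootMultiplicity_dvd u α
  have hv := pow_rootMultiplicity_dvd v α
  have h₁ : (X - C α) ^ (s + t - 1) ∣ u * derivative v :=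
    (pow_dvd_pow _ (by omega)).trans
      (pow_add (X - C α) s (t - 1) ▸ mul_dvd_mul hu (pow_sub_one_dvd_derivative_of_pow_dvd hv))
  have h₂ : (X - C α) ^ (s + t - 1) ∣ derivative u * v :=
    (pow_dvd_pow _ (by omega)).trans
      (pow_add (X - C α) (s - 1) t ▸ mul_dvd_mul (pow_sub_one_dvd_derivative_of_pow_dvd hu) hv)
  have := (le_rootMultiplicity_iff hw).2 (dvd_sub h₁ h₂)
  omega

variable [IsDomain R]

theorem rootMultiplicity_le_natDegree (p : R[X]) (α : R) :
    rootMultiplicity α p ≤ p.natDegree := by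
  classical
  exact (count_roots p).symm.le.trans ((Multiset.count_le_card _ _).trans (card_roots' p))

theorem rootMultiplicity_pow (p : R[X]) (n : ℕ) (α : R) :
    rootMultiplicity α (p ^ n) = n * rootMultiplicity α p := by
  classical
  rw [← count_roots, ← count_roots, roots_pow, Multiset.count_nsmul]

theorem natDegree_pos_or_of_rootMultiplicity_ne {p q : R[X]} {α : R}
    (h : rootMultiplicity α p ≠ rootMultiplicity α q) : 0 < p.natDegree ∨ 0 < q.natDegree := by
  have := rootMultiplicity_le_natDegree p α
  have := rootMultiplicity_le_natDegree q α
  omega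

theorem exists_not_isRoot_of_forall_dvd_isUnit {ι : Type*} {g : ι → R[X]}
    (h : ∀ p, (∀ i, p ∣ g i) → IsUnit p) (α : R) : ∃ i, ¬(g i).IsRoot α := by
  by_contra! hα
  exact not_isUnit_X_sub_C α (h _ fun i => dvd_iff_isRoot.2 (hα i))

end CommRing

section Field

variable {K : Type*} [Field K]

theorem rootMultiplicity_eq_of_wronskian_eq_zero [CharZero K] {u v : K[X]} (hu : u ≠ 0)
    (hv : v ≠ 0) (h : wronskian u v = 0) (α : K) :
    rootMultiplicity α u = rootMultiplicity α v := by
  obtain ⟨p, q, g, hpq, rfl, rfl⟩ := exists_reduced_factors u hu v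
  have hW : wronskian (g * p) (g * q) = g ^ 2 * wronskian p q := by
    simp only [wronskian, derivative_mul]; ring
  rw [hW, mul_eq_zero, or_iff_right (pow_ne_zero _ (left_ne_zero_of_mul hu)),
    hpq.isCoprime.wronskian_eq_zero_iff] at h
  have hp : rootMultiplicity α p = 0 := Nat.le_zero.1 <|
    (rootMultiplicity_le_natDegree p α).trans (derivative_eq_zero.1 h.1).le
  have hq : rootMultiplicity α q = 0 := Nat.le_zero.1 <|
    (rootMultiplicity_le_natDegree q α).trans (derivative_eq_zero.1 h.2).le
  rw [rootMultiplicity_mul hu, rootMultiplicity_mul hv, hp, hq]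

theorem natDegree_radical_mul_pow_le [DecidableEq K] (a f : K[X]) (n : ℕ) :
    (radical (a * f ^ n)).natDegree ≤ a.natDegree + f.natDegree := by
  have hdvd : radical (a * f ^ n) ∣ radical a * radical f :=
    radical_mul_dvd.trans (mul_dvd_mul_left _ radical_pow_dvd)
  refine (natDegree_le_of_dvd hdvd (mul_ne_zero radical_ne_zero radical_ne_zero)).trans ?_
  rw [natDegree_mul radical_ne_zero radical_ne_zero]
  exact Nat.add_le_add natDegree_radical_le natDegree_radical_le

variable [IsAlgClosed K]

theorem exists_rootMultiplicity_ne_of_not_associated {p q : K[X]} (hp : p ≠ 0) (hq : q ≠ 0)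
    (h : ¬Associated p q) : ∃ α, rootMultiplicity α p ≠ rootMultiplicity α q := by
  classical
  by_contra! hpq
  refine h ((IsAlgClosed.associated_iff_roots_eq_roots hp hq).2 (Multiset.ext.2 fun α => ?_))
  rw [count_roots, count_roots, hpq]

theorem pairwise_exists_rootMultiplicity_ne {ι : Type*} [LinearOrder ι] {f : ι → K[X]}
    (hf0 : ∀ i, f i ≠ 0) (hf : ∀ i j, i < j → ¬Associated (f i) (f j)) :
    Pairwise fun i j => ∃ α, rootMultiplicity α (f i) ≠ rootMultiplicity α (f j) := by
  intro i j hij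
  rcases hij.lt_or_gt with h | h
  · exact exists_rootMultiplicity_ne_of_not_associated (hf0 i) (hf0 j) (hf i j h)
  · obtain ⟨α, hα⟩ := exists_rootMultiplicity_ne_of_not_associated (hf0 j) (hf0 i) (hf j i h)
    exact ⟨α, hα.symm⟩

theorem natDegree_radical_le_card_roots [DecidableEq K] (p : K[X]) :
    (radical p).natDegree ≤ p.roots.toFinset.card := by
  rcases eq_or_ne p 0 with rfl | hp
  · simp
  have hsep : (radical p).Separable := PerfectField.separable_iff_squarefree.2 squarefree_radical
  rw [← IsAlgClosed.card_roots_eq_natDegree, ← Multiset.toFinset_card_of_nodup (nodup_roots hsep)]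
  exact card_le_card fun α hα => by
    simp only [Multiset.mem_toFinset, mem_roots hp, mem_roots radical_ne_zero] at hα ⊢
    exact hα.dvd radical_dvd_self

theorem natDegree_le_mul_card_roots_add [DecidableEq K] {F e : K[X]} {m : ℕ}
    (h : ∀ α, rootMultiplicity α F ≤ m + rootMultiplicity α e) :
    F.natDegree ≤ m * F.roots.toFinset.card + e.natDegree := by
  have hle : F.roots ≤ m • F.roots.toFinset.val + e.roots := Multiset.le_iff_count.2 fun α => by
    by_cases hα : α ∈ F.roots
    · simpa [count_roots, Multiset.count_dedup, hα] using h α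
    · simp [Multiset.count_eq_zero.2 hα]
  calc F.natDegree = Multiset.card F.roots := IsAlgClosed.card_roots_eq_natDegree.symm
    _ ≤ Multiset.card (m • F.roots.toFinset.val + e.roots) := Multiset.card_le_card hle
    _ ≤ m * F.roots.toFinset.card + e.natDegree := by
      rw [Multiset.card_add, Multiset.card_nsmul, Finset.card_val]
      exact Nat.add_le_add_left (card_roots' e) _

end Field

section MasonStothers

variable {K : Type*} [Field K] [DecidableEq K] [IsAlgClosed K] [CharZero K]

theorem natDegree_le_card_roots_add_radical {u v : K[X]} (h : IsCoprime u v) :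
    u.natDegree ≤ (u + v).roots.toFinset.card + (radical u).natDegree + (radical v).natDegree := by
  rcases Nat.eq_zero_or_pos u.natDegree with hu | hu
  · omega
  have hunit : ¬IsUnit u := fun hu' => hu.ne' (natDegree_eq_zero_of_isUnit hu')
  have hu0 : u ≠ 0 := ne_zero_of_natDegree_gt hu
  have hv0 : v ≠ 0 := by rintro rfl; exact hunit (isCoprime_zero_right.1 h)
  have hw0 : -(u + v) ≠ 0 := by
    rw [neg_ne_zero]
    intro hw
    rw [eq_neg_of_add_eq_zero_right hw, IsCoprime.neg_right_iff, isCoprime_self] at h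
    exact hunit h
  rcases Polynomial.abc hu0 hv0 hw0 h (by ring) with ⟨habc, -, -⟩ | ⟨hd, -, -⟩
  · have hdvd : radical (u * v * -(u + v)) ∣ radical u * radical v * radical (u + v) :=
      radical_mul_dvd.trans <|
        UniqueFactorizationDomain.radical_neg (a := u + v) ▸ mul_dvd_mul_right radical_mul_dvd _
    have hdeg := natDegree_le_of_dvd hdvd (by simp [radical_ne_zero])
    rw [natDegree_mul (by simp [radical_ne_zero]) radical_ne_zero,
      natDegree_mul radical_ne_zero radical_ne_zero] at hdeg
    have := natDegree_radical_le_card_roots (u + v)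
    omega
  · exact absurd (derivative_eq_zero.1 hd) hu.ne'

theorem natDegree_mul_pow_le_card_roots_add {a f a' f' : K[X]} {d : ℕ} (ha : a ≠ 0)
    (hf : f ≠ 0) (had : a.natDegree ≤ d) (hfd : f.natDegree ≤ d) (ha'd : a'.natDegree ≤ d)
    (hf'd : f'.natDegree ≤ d) (h : IsCoprime (a * f) (a' * f')) (n : ℕ) :
    a.natDegree + n * f.natDegree ≤ (a * f ^ n + a' * f' ^ n).roots.toFinset.card + 4 * d := by
  have := natDegree_le_card_roots_add_radical (h.mul_pow_mul_pow n n)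
  rw [natDegree_mul ha (pow_ne_zero _ hf), natDegree_pow] at this
  have := natDegree_radical_mul_pow_le a f n
  have := natDegree_radical_mul_pow_le a' f' n
  omega

theorem sup_natDegree_le_card_roots_add_of_fin_two {a f : Fin 2 → K[X]} {d : ℕ}
    (ha0 : ∀ i, a i ≠ 0) (hf0 : ∀ i, f i ≠ 0) (had : ∀ i, (a i).natDegree ≤ d)
    (hfd : ∀ i, (f i).natDegree ≤ d)
    (h : IsCoprime (a 0 * f 0) (a 1 * f 1)) (n : ℕ) :
    (univ.sup fun i => (a i).natDegree + n * (f i).natDegree) ≤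
      (∑ i, a i * f i ^ n).roots.toFinset.card + 4 * d := by
  rw [Fin.sum_univ_two]
  refine Finset.sup_le fun i _ => ?_
  fin_cases i
  · exact natDegree_mul_pow_le_card_roots_add (ha0 0) (hf0 0) (had 0) (hfd 0) (had 1) (hfd 1) h n
  · have := natDegree_mul_pow_le_card_roots_add (ha0 1) (hf0 1) (had 1) (hfd 1) (had 0) (hfd 0)
      h.symm n
    rwa [add_comm (a 1 * f 1 ^ n)] at this

end MasonStothers

section WronskianCoeff

variable {R : Type*} [CommRing R]

def wronskianCoeff (c₁ f₁ c₂ f₂ : R[X]) (n : ℕ) : R[X] :=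
  wronskian c₁ c₂ * (f₁ * f₂) + C (n : R) * (c₁ * c₂ * wronskian f₁ f₂)

theorem wronskian_mul_pow_succ (c₁ f₁ c₂ f₂ : R[X]) (n : ℕ) :
    wronskian (c₁ * f₁ ^ (n + 1)) (c₂ * f₂ ^ (n + 1)) =
      (f₁ * f₂) ^ n * wronskianCoeff c₁ f₁ c₂ f₂ (n + 1) := by
  simp only [wronskian, wronskianCoeff, derivative_mul, derivative_pow, Nat.add_sub_cancel,
    map_natCast]
  push_cast
  ring

theorem wronskian_sum_mul_pow_succ {ι : Type*} [DecidableEq ι] (c f : ι → R[X]) {S : Finset ι}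
    {i₀ : ι} (hi₀ : i₀ ∈ S) (n : ℕ) :
    wronskian (c i₀ * f i₀ ^ (n + 1)) (∑ i ∈ S, c i * f i ^ (n + 1)) =
      f i₀ ^ n * ∑ i ∈ S.erase i₀, wronskianCoeff (c i₀) (f i₀) (c i) (f i) (n + 1) * f i ^ n := by
  rw [← wronskianBilin_apply, map_sum, ← add_sum_erase _ _ hi₀, wronskianBilin_apply,
    wronskian_self_eq_zero, zero_add, mul_sum]
  refine sum_congr rfl fun i _ => ?_
  rw [wronskianBilin_apply, wronskian_mul_pow_succ]
  ring

theorem natDegree_wronskianCoeff_le {c₁ f₁ c₂ f₂ : R[X]} {A d : ℕ} (hc₁ : c₁.natDegree ≤ A)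
    (hc₂ : c₂.natDegree ≤ A) (hf₁ : f₁.natDegree ≤ d) (hf₂ : f₂.natDegree ≤ d) (n : ℕ) :
    (wronskianCoeff c₁ f₁ c₂ f₂ n).natDegree ≤ 2 * (A + d) := by
  refine natDegree_add_le_of_degree_le ?_ ?_
  · exact (natDegree_mul_le_of_le ((natDegree_wronskian_le _ _).trans (Nat.add_le_add hc₁ hc₂))
      (natDegree_mul_le_of_le hf₁ hf₂)).trans (by omega)
  · exact (natDegree_C_mul_le _ _).trans <| (natDegree_mul_le_of_le (natDegree_mul_le_of_le hc₁ hc₂)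
      ((natDegree_wronskian_le _ _).trans (Nat.add_le_add hf₁ hf₂))).trans (by omega)

theorem natDegree_lt_of_wronskian_mul_pow_eq [IsDomain R] {c g H H' : R[X]} {n : ℕ}
    (hc : c ≠ 0) (hg : g ≠ 0) (hH' : H' ≠ 0) (hW : wronskian (c * g ^ (n + 1)) H = g ^ n * H') :
    H'.natDegree < c.natDegree + g.natDegree + H.natDegree := by
  have := natDegree_wronskian_lt_add (hW ▸ mul_ne_zero (pow_ne_zero _ hg) hH')
  rw [hW, natDegree_mul (pow_ne_zero _ hg) hH', natDegree_mul hc (pow_ne_zero _ hg),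
    natDegree_pow, natDegree_pow, add_one_mul] at this
  omega

theorem rootMultiplicity_le_of_wronskian_mul_pow_eq [IsDomain R] {c g H H' : R[X]} {n : ℕ}
    (hc : c ≠ 0) (hg : g ≠ 0) (hH' : H' ≠ 0) (hW : wronskian (c * g ^ (n + 1)) H = g ^ n * H')
    (α : R) : rootMultiplicity α H ≤ rootMultiplicity α H' + 1 := by
  have := rootMultiplicity_add_le_rootMultiplicity_wronskian
    (hW ▸ mul_ne_zero (pow_ne_zero _ hg) hH') α
  rw [hW, rootMultiplicity_mul (mul_ne_zero (pow_ne_zero _ hg) hH'),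
    rootMultiplicity_mul (mul_ne_zero hc (pow_ne_zero _ hg)), rootMultiplicity_pow,
    rootMultiplicity_pow, add_one_mul] at this
  omega

end WronskianCoeff

section WronskianDescent

variable {K ι : Type*} [Field K]

theorem wronskianCoeff_ne_zero [CharZero K] {c₁ f₁ c₂ f₂ : K[X]} {A n : ℕ} (hc₁ : c₁ ≠ 0)
    (hc₂ : c₂ ≠ 0) (hf₁ : f₁ ≠ 0) (hf₂ : f₂ ≠ 0) (hA₁ : c₁.natDegree ≤ A) (hA₂ : c₂.natDegree ≤ A) (hn : A ≤ n)
    (hf : ∃ α, rootMultiplicity α f₁ ≠ rootMultiplicity α f₂) :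
    wronskianCoeff c₁ f₁ c₂ f₂ (n + 1) ≠ 0 := by
  obtain ⟨α, hα⟩ := hf
  intro h0
  have hu : c₁ * f₁ ^ (n + 1) ≠ 0 := mul_ne_zero hc₁ (pow_ne_zero _ hf₁)
  have hv : c₂ * f₂ ^ (n + 1) ≠ 0 := mul_ne_zero hc₂ (pow_ne_zero _ hf₂)
  have hmult := rootMultiplicity_eq_of_wronskian_eq_zero hu hv
    (by rw [wronskian_mul_pow_succ, h0, mul_zero]) α
  rw [rootMultiplicity_mul hu, rootMultiplicity_mul hv, rootMultiplicity_pow,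
    rootMultiplicity_pow] at hmult
  -- the multiplicities of `c₁, c₂` are below `n + 1`, so they are remainders mod `n + 1`
  have hdiv : ∀ x s, x ≤ A → (x + (n + 1) * s) / (n + 1) = s := fun x s hx => by
    rw [Nat.add_mul_div_left _ _ n.succ_pos, Nat.div_eq_of_lt (by omega), zero_add]
  apply hα
  rw [← hdiv _ (rootMultiplicity α f₁) ((rootMultiplicity_le_natDegree c₁ α).trans hA₁), hmult,
    hdiv _ _ ((rootMultiplicity_le_natDegree c₂ α).trans hA₂)]

/-- `e` absorbs the roots of the coefficients produced by the Wronskian descent. -/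
def SumMulPowBounds (f : ι → K[X]) (m A N P E : ℕ) : Prop :=
  ∀ (S : Finset ι) (c : ι → K[X]) (i : ι) (n : ℕ), #S = m + 1 → i ∈ S →
    (∀ j ∈ S, c j ≠ 0) → (∀ j ∈ S, (c j).natDegree ≤ A) → N ≤ n →
    ∑ j ∈ S, c j * f j ^ n ≠ 0 ∧
    n * (f i).natDegree ≤ (∑ j ∈ S, c j * f j ^ n).natDegree + P ∧
    ∃ e : K[X], e ≠ 0 ∧ e.natDegree ≤ E ∧ ∀ α, rootMultiplicity α (∑ j ∈ S, c j * f j ^ n) ≤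
      m + n * rootMultiplicity α (f i) + rootMultiplicity α e

variable {f : ι → K[X]}

theorem sumMulPowBounds_zero (hf0 : ∀ i, f i ≠ 0) (A : ℕ) : SumMulPowBounds f 0 A 0 0 A := by
  intro S c i n hS hi hc hcA _
  obtain ⟨j, rfl⟩ := card_eq_one.1 hS
  obtain rfl := mem_singleton.1 hi
  have hci := hc i (mem_singleton_self i)
  have hF : c i * f i ^ n ≠ 0 := mul_ne_zero hci (pow_ne_zero _ (hf0 i))
  rw [sum_singleton]
  refine ⟨hF, ?_, c i, hci, hcA i (mem_singleton_self i), fun α => ?_⟩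
  · rw [natDegree_mul hci (pow_ne_zero _ (hf0 i)), natDegree_pow]
    omega
  · rw [rootMultiplicity_mul hF, rootMultiplicity_pow]
    omega

theorem sumMulPowBounds_succ [CharZero K] (hf0 : ∀ i, f i ≠ 0) {d : ℕ}
    (hfd : ∀ i, (f i).natDegree ≤ d)
    (hf : Pairwise fun i j => ∃ α, rootMultiplicity α (f i) ≠ rootMultiplicity α (f j))
    {m A N P E : ℕ} (h : SumMulPowBounds f m (2 * (A + d)) N P E) :
    SumMulPowBounds f (m + 1) A (max N A + 1) (P + A + 2 * d) E := by
  classical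
  intro S c i n' hS hi hc hcA hn
  obtain ⟨n, rfl⟩ : ∃ n, n' = n + 1 := ⟨n' - 1, by omega⟩
  obtain ⟨i₀, hi₀, hi₀i⟩ := exists_mem_ne (by omega : 1 < #S) i
  obtain ⟨hF', hdeg', e, he, heE, hmult'⟩ := h (S.erase i₀)
    (fun j => wronskianCoeff (c i₀) (f i₀) (c j) (f j) (n + 1)) i n
    (by rw [card_erase_of_mem hi₀, hS]; rfl) (mem_erase.2 ⟨hi₀i.symm, hi⟩)
    (fun j hj => wronskianCoeff_ne_zero (hc i₀ hi₀) (hc j (mem_of_mem_erase hj)) (hf0 i₀)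
      (hf0 j) (hcA i₀ hi₀) (hcA j (mem_of_mem_erase hj)) (by omega)
      (hf (ne_of_mem_erase hj).symm))
    (fun j hj => natDegree_wronskianCoeff_le (hcA i₀ hi₀) (hcA j (mem_of_mem_erase hj))
      (hfd i₀) (hfd j) _)
    (by omega)
  have hW := wronskian_sum_mul_pow_succ c f hi₀ n
  have hF : ∑ j ∈ S, c j * f j ^ (n + 1) ≠ 0 := by
    intro h0
    rw [h0, wronskian_zero_right] at hW
    exact mul_ne_zero (pow_ne_zero _ (hf0 i₀)) hF' hW.symm
  refine ⟨hF, ?_, e, he, heE, fun α => ?_⟩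
  · have := natDegree_lt_of_wronskian_mul_pow_eq (hc i₀ hi₀) (hf0 i₀) hF' hW
    have := hcA i₀ hi₀
    have := hfd i₀
    have := hfd i
    rw [add_one_mul]
    omega
  · have := rootMultiplicity_le_of_wronskian_mul_pow_eq (hc i₀ hi₀) (hf0 i₀) hF' hW α
    have := hmult' α
    rw [add_one_mul]
    omega

theorem exists_sumMulPowBounds [CharZero K] (hf0 : ∀ i, f i ≠ 0) {d : ℕ}
    (hfd : ∀ i, (f i).natDegree ≤ d)
    (hf : Pairwise fun i j => ∃ α, rootMultiplicity α (f i) ≠ rootMultiplicity α (f j))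
    (m A : ℕ) : ∃ N P E, SumMulPowBounds f m A N P E := by
  induction m generalizing A with
  | zero => exact ⟨_, _, _, sumMulPowBounds_zero hf0 A⟩
  | succ m ih =>
    obtain ⟨N, P, E, h⟩ := ih (2 * (A + d))
    exact ⟨_, _, _, sumMulPowBounds_succ hf0 hfd hf h⟩

variable [IsAlgClosed K] [CharZero K] [DecidableEq K]

theorem exists_sup_natDegree_le_card_roots_sum_mul_pow [Fintype ι] {a : ι → K[X]} {d : ℕ}
    (ha0 : ∀ i, a i ≠ 0) (had : ∀ i, (a i).natDegree ≤ d) (hf0 : ∀ i, f i ≠ 0)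
    (hfd : ∀ i, (f i).natDegree ≤ d)
    (hf : Pairwise fun i j => ∃ α, rootMultiplicity α (f i) ≠ rootMultiplicity α (f j))
    (hroot : ∀ α, ∃ i, ¬(f i).IsRoot α) :
    ∃ N B : ℕ, ∀ n, N ≤ n → (univ.sup fun i => (a i).natDegree + n * (f i).natDegree) ≤
      (Fintype.card ι - 1) * (∑ j, a j * f j ^ n).roots.toFinset.card + B := by
  have : Nonempty ι := ⟨(hroot 0).choose⟩
  obtain ⟨m, hm⟩ := Nat.exists_eq_add_one_of_ne_zero (Fintype.card_ne_zero (α := ι))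
  obtain ⟨N, P, E, h⟩ := exists_sumMulPowBounds hf0 hfd hf m d
  refine ⟨N, d + P + (m + 1) * E, fun n hn => Finset.sup_le fun i _ => ?_⟩
  choose _ hdeg e he heE hmult using fun j =>
    h univ a j n (card_univ.trans hm) (mem_univ j) (fun j _ => ha0 j) (fun j _ => had j) hn
  choose sel hsel using hroot
  -- at a root `α` of the sum, use the term whose `f` does not vanish at `α`
  have hmult' : ∀ α, rootMultiplicity α (∑ j, a j * f j ^ n) ≤
      m + rootMultiplicity α (∏ j, e j) := fun α => by
    have := hmult (sel α) α
    rw [rootMultiplicity_eq_zero (hsel α), mul_zero, add_zero] at this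
    exact this.trans (Nat.add_le_add_left (rootMultiplicity_le_rootMultiplicity_of_dvd
      (prod_ne_zero_iff.2 fun j _ => he j) (dvd_prod_of_mem e (mem_univ _)) α) _)
  have hE : (∏ j, e j).natDegree ≤ (m + 1) * E := by
    refine (natDegree_prod_le _ _).trans ((sum_le_card_nsmul _ _ _ fun j _ => heE j).trans ?_)
    rw [card_univ, hm, smul_eq_mul]
  have := natDegree_le_mul_card_roots_add hmult'
  have := hdeg i
  have := had i
  rw [hm, Nat.add_sub_cancel]
  omega

end WronskianDescent

end Polynomial

theorem two_div_mul_sub_le_of_two_mul_le {k M N d : ℕ} (hk : 2 ≤ k)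
    (h : 2 * M ≤ k * (k - 1) * (N + 2 * d * k)) :
    2 / ((k : ℝ) * ((k : ℝ) - 1)) * M - 2 * d * k ≤ N := by
  have hk' : (2 : ℝ) ≤ k := by exact_mod_cast hk
  have hpos : (0 : ℝ) < k * (k - 1) := by nlinarith
  have h' : (2 * M : ℝ) ≤ k * (k - 1) * (N + 2 * d * k) := by
    have := (Nat.cast_le (α := ℝ)).2 h
    push_cast [Nat.cast_sub (by omega : 1 ≤ k)] at this
    exact this
  rw [sub_le_iff_le_add, div_mul_eq_mul_div, div_le_iff₀ hpos]
  linarith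

theorem two_div_mul_sub_le_of_lt_two {k : ℕ} (hk : k < 2) (M N d : ℕ) :
    2 / ((k : ℝ) * ((k : ℝ) - 1)) * M - 2 * d * k ≤ N := by
  -- `2 / 0 = 0` in `ℝ`, so the left-hand side is `-2dk`
  have hk0 : (k : ℝ) * ((k : ℝ) - 1) = 0 := by interval_cases k <;> norm_num
  rw [hk0, div_zero, zero_mul, zero_sub, neg_le]
  exact (neg_nonpos.2 (by positivity)).trans (by positivity)

theorem two_div_mul_sub_le_of_le_mul_add {k M R B : ℕ} (d : ℕ) (hk : 3 ≤ k)
    (hM : M ≤ (k - 1) * R + B) (hB : k * B ≤ M) :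
    2 / ((k : ℝ) * ((k : ℝ) - 1)) * M - 2 * d * k ≤ R := by
  refine two_div_mul_sub_le_of_two_mul_le (by omega) ?_
  obtain ⟨j, rfl⟩ : ∃ j, k = j + 3 := ⟨k - 3, by omega⟩
  rw [show j + 3 - 1 = j + 2 by omega] at hM ⊢
  have hMR : (j + 2) * M ≤ (j + 2) * ((j + 3) * R) := by nlinarith
  have := Nat.le_of_mul_le_mul_left hMR (by omega)
  calc 2 * M ≤ (j + 2) * ((j + 3) * R) := by nlinarith
    _ ≤ (j + 3) * (j + 2) * (R + 2 * d * (j + 3)) := by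
      rw [mul_add, ← mul_assoc, mul_comm (j + 2)]
      exact Nat.le_add_right _ _

theorem number_of_distinct_roots_of_Fn_general
    (k d : ℕ) (a f : Fin k → Polynomial ℂ)
    (ha0 : ∀ i, a i ≠ 0) (hf0 : ∀ i, f i ≠ 0)
    (had : ∀ i, (a i).natDegree ≤ d) (hfd : ∀ i, (f i).natDegree ≤ d)
    (hnc : ∀ i j : Fin k, i < j → ¬ ∃ c : ℂ,
      algebraMap (Polynomial ℂ) (RatFunc ℂ) (f i) /
        algebraMap (Polynomial ℂ) (RatFunc ℂ) (f j) = RatFunc.C c)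
    (hgcd : ∀ p : Polynomial ℂ, (∀ i, p ∣ a i * f i) → IsUnit p) :
    ∃ C₆ : ℝ, 0 < C₆ ∧
      ∀ n : ℕ, C₆ ≤ (n : ℝ) →
        2 / ((k : ℝ) * ((k : ℝ) - 1)) *
            ((Finset.univ.sup fun i => (a i).natDegree + n * (f i).natDegree : ℕ) : ℝ)
          - 2 * (d : ℝ) * (k : ℝ) ≤
        (((∑ i, a i * f i ^ n : Polynomial ℂ).roots.toFinset.card : ℕ) : ℝ) := by
  rcases Nat.lt_or_ge k 2 with hk | hk
  · exact ⟨1, one_pos, fun n _ => two_div_mul_sub_le_of_lt_two hk _ _ _⟩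
  obtain rfl | hk3 : k = 2 ∨ 3 ≤ k := by omega
  · have hcop : IsCoprime (a 0 * f 0) (a 1 * f 1) :=
      IsRelPrime.isCoprime fun p h₀ h₁ => hgcd p (Fin.forall_fin_two.2 ⟨h₀, h₁⟩)
    refine ⟨1, one_pos, fun n _ => two_div_mul_sub_le_of_two_mul_le le_rfl ?_⟩
    have := sup_natDegree_le_card_roots_add_of_fin_two ha0 hf0 had hfd hcop n
    omega
  have hNC := pairwise_exists_rootMultiplicity_ne hf0 fun i j hij hA =>
    hnc i j hij (RatFunc.exists_algebraMap_div_eq_C_of_associated hA)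
  have hroot (α : ℂ) : ∃ i, ¬(f i).IsRoot α :=
    (exists_not_isRoot_of_forall_dvd_isUnit hgcd α).imp fun _ hi hf =>
      hi (hf.dvd (dvd_mul_left _ _))
  obtain ⟨α, hα⟩ := hNC (i := ⟨0, by omega⟩) (j := ⟨1, by omega⟩) (by simp)
  obtain ⟨i₁, hi₁⟩ : ∃ i, 0 < (f i).natDegree :=
    (natDegree_pos_or_of_rootMultiplicity_ne hα).elim (⟨_, ·⟩) (⟨_, ·⟩)
  obtain ⟨N, B, hB⟩ := exists_sup_natDegree_le_card_roots_sum_mul_pow ha0 had hf0 hfd hNC hroot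
  refine ⟨N + k * B + 1, by positivity, fun n hn => ?_⟩
  have hn : N + k * B + 1 ≤ n := by exact_mod_cast hn
  refine two_div_mul_sub_le_of_le_mul_add d hk3 (by simpa using hB n (by omega)) ?_
  have hle := le_sup (f := fun i => (a i).natDegree + n * (f i).natDegree) (mem_univ i₁)
  have := Nat.le_mul_of_pos_right n hi₁
  omega

/-- **Lemma (number of distinct roots of $F_n$).** Under the hypotheses of the
parametric Skolem theorem with $\gcd(a_1 f_1, …, a_k f_k) = 1$, there is an effective
constant $C_6 > 0$ such that for all $n ≥ C_6$ the polynomial $F_n$ has at least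
$\frac{2}{k(k-1)} \max_i\{\deg a_i + n \deg f_i\} − 2dk$ distinct roots. -/
theorem number_of_distinct_roots_of_Fn
    (k d : ℕ) (a f : Fin k → Polynomial ℂ)
    (ha0 : ∀ i, a i ≠ 0) (hf0 : ∀ i, f i ≠ 0)
    (haA : ∀ i, (a i).AlgCoeffs) (hfA : ∀ i, (f i).AlgCoeffs)
    (had : ∀ i, (a i).natDegree ≤ d) (hfd : ∀ i, (f i).natDegree ≤ d)
    (hnc : ∀ i j : Fin k, i < j → ¬ ∃ c : ℂ,
      algebraMap (Polynomial ℂ) (RatFunc ℂ) (f i) /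
        algebraMap (Polynomial ℂ) (RatFunc ℂ) (f j) = RatFunc.C c)
    (hne : ∀ r s t : Fin k, r < s → s < t →
      ¬ IsExceptionalPair
        (algebraMap (Polynomial ℂ) (RatFunc ℂ) (f s) /
          algebraMap (Polynomial ℂ) (RatFunc ℂ) (f r))
        (algebraMap (Polynomial ℂ) (RatFunc ℂ) (f t) /
          algebraMap (Polynomial ℂ) (RatFunc ℂ) (f r)))
    (hgcd : ∀ p : Polynomial ℂ, (∀ i, p ∣ a i * f i) → IsUnit p) :
    ∃ C₆ : ℝ, 0 < C₆ ∧
      ∀ n : ℕ, C₆ ≤ (n : ℝ) →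
        2 / ((k : ℝ) * ((k : ℝ) - 1)) *
            ((Finset.univ.sup fun i => (a i).natDegree + n * (f i).natDegree : ℕ) : ℝ)
          - 2 * (d : ℝ) * (k : ℝ) ≤
        (((∑ i, a i * f i ^ n : Polynomial ℂ).roots.toFinset.card : ℕ) : ℝ) :=
  number_of_distinct_roots_of_Fn_general k d a f ha0 hf0 had hfd hnc hgcd

end
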